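/- arXiv:1212.5566 — 3 statements merged into one kernel-verified Lean document; each statement's English description precedes it below -/
import Mathlib

section
/- Entropy identity for the regularized Euler system: Suppose (ρ, m, E) is a smooth solution of ∂_t ρ + div m − div f = 0, ∂_t m + div(u ⊗ m) + ∇p − div 𝕘 = 0, ∂_t E + div(u(E+p)) − div(h + 𝕘·u) = 0, with ρ > 0, u := m/ρ, e := E/ρ − ½|u|². If one writes 𝕘 = 𝔾 + f ⊗ u and h = l − ½|u|² f for smooth fields 𝔾 (a d×d tensor field), f and l (vector fields), then the specific entropy s = s(ρ,e) satisfies the pointwise identity ρ(∂_t s + u·∇s) + div((e s_e − ρ s_ρ) f − s_e l) − f·∇(e s_e − ρ s_ρ) + l·∇s_e − s_e (𝔾 : ∇u) = 0. -/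
noncomputable section

open Real

/-- Partial derivative with respect to the first variable (`ρ`). -/
def D1 (f : ℝ × ℝ → ℝ) (x : ℝ × ℝ) : ℝ := fderiv ℝ f x (1, 0)

/-- Partial derivative with respect to the second variable (`e`). -/
def D2 (f : ℝ × ℝ → ℝ) (x : ℝ × ℝ) : ℝ := fderiv ℝ f x (0, 1)

/-- The state domain `(0,∞)²`. -/
def dom : Set (ℝ × ℝ) := {x : ℝ × ℝ | 0 < x.1 ∧ 0 < x.2}

/-- `s_ρ` -/
def sRho (s : ℝ × ℝ → ℝ) : ℝ × ℝ → ℝ := D1 s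

/-- `s_e` -/
def sE (s : ℝ × ℝ → ℝ) : ℝ × ℝ → ℝ := D2 s

/-- `s_{ρe}` -/
def sRhoE (s : ℝ × ℝ → ℝ) : ℝ × ℝ → ℝ := D1 (D2 s)

/-- `s_{ee}` -/
def sEE (s : ℝ × ℝ → ℝ) : ℝ × ℝ → ℝ := D2 (D2 s)

/-- The pressure `p := -ρ² s_ρ / s_e`. -/
def press (s : ℝ × ℝ → ℝ) (x : ℝ × ℝ) : ℝ := -x.1 ^ 2 * sRho s x / sE s x

/-- The temperature `T := 1 / s_e`. -/
def temp (s : ℝ × ℝ → ℝ) (x : ℝ × ℝ) : ℝ := (sE s x)⁻¹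

/-- `∂_ρ(ρ² s_ρ)` -/
def dRho2sRho (s : ℝ × ℝ → ℝ) (x : ℝ × ℝ) : ℝ :=
  deriv (fun r : ℝ => r ^ 2 * sRho s (r, x.2)) x.1

/-- `det Σ := ∂_ρ(ρ² s_ρ)·s_{ee} - ρ² s_{ρe}²`. -/
def detSigma (s : ℝ × ℝ → ℝ) (x : ℝ × ℝ) : ℝ :=
  dRho2sRho s x * sEE s x - x.1 ^ 2 * (sRhoE s x) ^ 2

/-- `p_ρ` -/
def pRho (s : ℝ × ℝ → ℝ) : ℝ × ℝ → ℝ := D1 (press s)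

/-- `p_e` -/
def pE (s : ℝ × ℝ → ℝ) : ℝ × ℝ → ℝ := D2 (press s)

/-- `T_ρ` -/
def tRho (s : ℝ × ℝ → ℝ) : ℝ × ℝ → ℝ := D1 (temp s)

/-- `T_e` -/
def tE (s : ℝ × ℝ → ℝ) : ℝ × ℝ → ℝ := D2 (temp s)

/-- The specific heat at constant pressure
`c_p := s_e⁻¹ (p_ρ s_e - p_e s_ρ) / (p_ρ T_e - p_e T_ρ)`. -/
def cP (s : ℝ × ℝ → ℝ) (x : ℝ × ℝ) : ℝ :=
  (sE s x)⁻¹ * (pRho s x * sE s x - pE s x * sRho s x) /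
    (pRho s x * tE s x - pE s x * tRho s x)

/-- The squared sound speed `c² := p_ρ - (s_ρ/s_e) p_e`. -/
def cSq (s : ℝ × ℝ → ℝ) (x : ℝ × ℝ) : ℝ := pRho s x - sRho s x / sE s x * pE s x

/-- The convexity conditions `∂_ρ(ρ² s_ρ) < 0`, `s_{ee} < 0`, `det Σ > 0` on the domain. -/
def Convexity (s : ℝ × ℝ → ℝ) : Prop :=
  ∀ x ∈ dom, dRho2sRho s x < 0 ∧ sEE s x < 0 ∧ 0 < detSigma s x

/-- Time derivative `∂_t f` of a scalar field on space-time `ℝ × ℝ^n` (time first). -/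
def Dt {n : ℕ} (f : ℝ × (Fin n → ℝ) → ℝ) (q : ℝ × (Fin n → ℝ)) : ℝ :=
  fderiv ℝ f q (1, 0)

/-- Spatial partial derivative `∂_{x_i} f` of a scalar field on space-time `ℝ × ℝ^n`. -/
def Dx {n : ℕ} (i : Fin n) (f : ℝ × (Fin n → ℝ) → ℝ) (q : ℝ × (Fin n → ℝ)) : ℝ :=
  fderiv ℝ f q (0, Pi.single i 1)

/-!
Mass conservation turns the momentum and energy equations into material form, and subtracting
`u ·` (momentum) from the energy equation leaves the internal energy balance
`ρ De/Dt + (e - ½|u|²) div f + p div u = div h + 𝕘 : ∇u`. For `𝕘 = 𝔾 + f ⊗ u` and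
`h = l - ½|u|² f` the kinetic-energy terms carried by `f` cancel:
`ρ De/Dt + e div f + p div u = div l + 𝔾 : ∇u`. The chain rule
`Ds/Dt = s_ρ Dρ/Dt + s_e De/Dt`, the mass equation `Dρ/Dt + ρ div u = div f` and
`p s_e + ρ² s_ρ = 0` then give the identity once the divergence of the entropy flux is expanded
by the product rule.
-/

open Finset

section Calculus

variable {X : Type*} [NormedAddCommGroup X] [NormedSpace ℝ X] {f g : X → ℝ} {x : X}

theorem fderiv_add_apply (hf : DifferentiableAt ℝ f x) (hg : DifferentiableAt ℝ g x) (v : X) :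
    fderiv ℝ (fun y => f y + g y) x v = fderiv ℝ f x v + fderiv ℝ g x v := by
  simp [fderiv_fun_add hf hg]

theorem fderiv_sub_apply (hf : DifferentiableAt ℝ f x) (hg : DifferentiableAt ℝ g x) (v : X) :
    fderiv ℝ (fun y => f y - g y) x v = fderiv ℝ f x v - fderiv ℝ g x v := by
  simp [fderiv_fun_sub hf hg]

theorem fderiv_mul_apply (hf : DifferentiableAt ℝ f x) (hg : DifferentiableAt ℝ g x) (v : X) :
    fderiv ℝ (fun y => f y * g y) x v = f x * fderiv ℝ g x v + g x * fderiv ℝ f x v := by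
  simp [fderiv_fun_mul hf hg]

theorem fderiv_sum_apply {ι : Type*} {t : Finset ι} {F : ι → X → ℝ}
    (hF : ∀ i ∈ t, DifferentiableAt ℝ (F i) x) (v : X) :
    fderiv ℝ (fun y => ∑ i ∈ t, F i y) x v = ∑ i ∈ t, fderiv ℝ (F i) x v := by
  simp [fderiv_fun_sum hF]

theorem fderiv_comp_prodMk_apply {s : ℝ × ℝ → ℝ} {a b : X → ℝ}
    (hs : DifferentiableAt ℝ s (a x, b x)) (ha : DifferentiableAt ℝ a x)
    (hb : DifferentiableAt ℝ b x) (v : X) :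
    fderiv ℝ (fun y => s (a y, b y)) x v
      = D1 s (a x, b x) * fderiv ℝ a x v + D2 s (a x, b x) * fderiv ℝ b x v := by
  have hv : (fderiv ℝ a x v, fderiv ℝ b x v)
      = fderiv ℝ a x v • ((1 : ℝ), (0 : ℝ)) + fderiv ℝ b x v • ((0 : ℝ), (1 : ℝ)) := by
    simp
  rw [show (fun y => s (a y, b y)) = s ∘ fun y => (a y, b y) from rfl,
    (hs.hasFDerivAt.comp x (ha.hasFDerivAt.prodMk hb.hasFDerivAt)).fderiv]
  simp only [ContinuousLinearMap.comp_apply, ContinuousLinearMap.prod_apply, hv, map_add,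
    map_smul, smul_eq_mul, D1, D2]
  ring

theorem ContDiffAt.differentiableAt_D1 {s : ℝ × ℝ → ℝ} {z : ℝ × ℝ} (hs : ContDiffAt ℝ 2 s z) :
    DifferentiableAt ℝ (D1 s) z :=
  ((hs.fderiv_right (m := 1) (by norm_num)).clm_apply contDiffAt_const).differentiableAt
    (by norm_num)

theorem ContDiffAt.differentiableAt_D2 {s : ℝ × ℝ → ℝ} {z : ℝ × ℝ} (hs : ContDiffAt ℝ 2 s z) :
    DifferentiableAt ℝ (D2 s) z :=
  ((hs.fderiv_right (m := 1) (by norm_num)).clm_apply contDiffAt_const).differentiableAt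
    (by norm_num)

end Calculus

theorem isOpen_dom : IsOpen dom :=
  (isOpen_lt continuous_const continuous_fst).inter (isOpen_lt continuous_const continuous_snd)

section KineticEnergy

variable {n : ℕ}

def kineticEnergy (v : Fin n → ℝ) : ℝ := 1 / 2 * ∑ i, v i ^ 2

@[fun_prop]
theorem differentiable_kineticEnergy : Differentiable ℝ (kineticEnergy (n := n)) := by
  unfold kineticEnergy; fun_prop

theorem fderiv_kineticEnergy_apply {X : Type*} [NormedAddCommGroup X] [NormedSpace ℝ X]
    {u : X → Fin n → ℝ} {x : X} (hu : DifferentiableAt ℝ u x) (v : X) :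
    fderiv ℝ (fun y => kineticEnergy (u y)) x v = ∑ i, u x i * fderiv ℝ (fun y => u y i) x v := by
  have hui : ∀ i, DifferentiableAt ℝ (fun y => u y i) x := fun i => by fun_prop
  have hsq : ∀ i, fderiv ℝ (fun y => u y i * u y i) x v
      = 2 * (u x i * fderiv ℝ (fun y => u y i) x v) := fun i => by
    rw [fderiv_mul_apply (hui i) (hui i)]; ring
  unfold kineticEnergy
  rw [fderiv_const_mul (by fun_prop), smul_apply, smul_eq_mul,
    fderiv_sum_apply (fun i _ => by fun_prop)]
  simp only [sq, hsq, ← Finset.mul_sum]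
  ring

end KineticEnergy

section SpaceTime

variable {n : ℕ} {q : ℝ × (Fin n → ℝ)} {φ ψ : ℝ × (Fin n → ℝ) → ℝ}
  {u F G : ℝ × (Fin n → ℝ) → Fin n → ℝ}

def materialDeriv (u : ℝ × (Fin n → ℝ) → Fin n → ℝ) (φ : ℝ × (Fin n → ℝ) → ℝ)
    (q : ℝ × (Fin n → ℝ)) : ℝ :=
  Dt φ q + ∑ i, u q i * Dx i φ q

def divergence (F : ℝ × (Fin n → ℝ) → Fin n → ℝ) (q : ℝ × (Fin n → ℝ)) : ℝ :=
  ∑ i, Dx i (fun r => F r i) q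

theorem materialDeriv_add (hφ : DifferentiableAt ℝ φ q) (hψ : DifferentiableAt ℝ ψ q) :
    materialDeriv u (fun r => φ r + ψ r) q = materialDeriv u φ q + materialDeriv u ψ q := by
  simp only [materialDeriv, Dt, Dx, fderiv_add_apply hφ hψ, mul_add, sum_add_distrib]
  ring

theorem materialDeriv_mul (hφ : DifferentiableAt ℝ φ q) (hψ : DifferentiableAt ℝ ψ q) :
    materialDeriv u (fun r => φ r * ψ r) q
      = φ q * materialDeriv u ψ q + ψ q * materialDeriv u φ q := by
  simp only [materialDeriv, Dt, Dx, fderiv_mul_apply hφ hψ, mul_add, sum_add_distrib, mul_sum]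
  ring_nf

theorem materialDeriv_kineticEnergy (hu : DifferentiableAt ℝ u q) :
    materialDeriv u (fun r => kineticEnergy (u r)) q
      = ∑ j, u q j * materialDeriv u (fun r => u r j) q := by
  simp only [materialDeriv, Dt, Dx, fderiv_kineticEnergy_apply hu, mul_add, sum_add_distrib,
    mul_sum]
  congr 1
  rw [sum_comm]
  exact sum_congr rfl fun i _ => sum_congr rfl fun j _ => by ring

theorem materialDeriv_comp_prodMk {s : ℝ × ℝ → ℝ} (hs : DifferentiableAt ℝ s (φ q, ψ q))
    (hφ : DifferentiableAt ℝ φ q) (hψ : DifferentiableAt ℝ ψ q) :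
    materialDeriv u (fun r => s (φ r, ψ r)) q
      = D1 s (φ q, ψ q) * materialDeriv u φ q + D2 s (φ q, ψ q) * materialDeriv u ψ q := by
  simp only [materialDeriv, Dt, Dx, fderiv_comp_prodMk_apply hs hφ hψ, mul_add, sum_add_distrib,
    mul_sum]
  ring_nf

theorem divergence_mul_left (hψ : DifferentiableAt ℝ ψ q) (hF : DifferentiableAt ℝ F q) :
    divergence (fun r i => ψ r * F r i) q = ψ q * divergence F q + ∑ i, F q i * Dx i ψ q := by
  simp (disch := fun_prop) only [divergence, Dx, fderiv_mul_apply, sum_add_distrib, mul_sum]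

theorem divergence_mul_right (hψ : DifferentiableAt ℝ ψ q) (hF : DifferentiableAt ℝ F q) :
    divergence (fun r i => F r i * ψ r) q = ψ q * divergence F q + ∑ i, F q i * Dx i ψ q := by
  simp (disch := fun_prop) only [divergence, Dx, fderiv_mul_apply, sum_add_distrib, mul_sum]
  ring

theorem divergence_sub (hF : DifferentiableAt ℝ F q) (hG : DifferentiableAt ℝ G q) :
    divergence (fun r i => F r i - G r i) q = divergence F q - divergence G q := by
  simp (disch := fun_prop) only [divergence, Dx, fderiv_sub_apply, sum_sub_distrib]

theorem divergence_add_sum_mul {h : ℝ × (Fin n → ℝ) → Fin n → ℝ}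
    {g : ℝ × (Fin n → ℝ) → Fin n → Fin n → ℝ} (hh : DifferentiableAt ℝ h q)
    (hg : DifferentiableAt ℝ g q) (hu : DifferentiableAt ℝ u q) :
    divergence (fun r i => h r i + ∑ j, g r i j * u r j) q
      = divergence h q + ∑ i, ∑ j, g q i j * Dx i (fun r => u r j) q
        + ∑ j, u q j * divergence (fun r i => g r i j) q := by
  simp (disch := fun_prop) only [divergence, Dx, fderiv_add_apply, fderiv_sum_apply,
    fderiv_mul_apply, sum_add_distrib, mul_sum]
  rw [sum_comm (f := fun j i => u q j * _)]
  ring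

end SpaceTime

section Balance

variable {n : ℕ} {q : ℝ × (Fin n → ℝ)} {ρ e p : ℝ × (Fin n → ℝ) → ℝ}
  {u f : ℝ × (Fin n → ℝ) → Fin n → ℝ}

theorem mass_balance_material (hρ : DifferentiableAt ℝ ρ q) (hu : DifferentiableAt ℝ u q)
    (hmass : Dt ρ q + divergence (fun r i => ρ r * u r i) q - divergence f q = 0) :
    materialDeriv u ρ q + ρ q * divergence u q = divergence f q := by
  rw [divergence_mul_left hρ hu] at hmass
  unfold materialDeriv
  linear_combination hmass

theorem momentum_balance_material {g : ℝ × (Fin n → ℝ) → Fin n → Fin n → ℝ} {j : Fin n}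
    (hρ : DifferentiableAt ℝ ρ q) (hu : DifferentiableAt ℝ u q)
    (hmass : materialDeriv u ρ q + ρ q * divergence u q = divergence f q)
    (hmom : Dt (fun r => ρ r * u r j) q + divergence (fun r i => u r i * (ρ r * u r j)) q
      + Dx j p q - divergence (fun r i => g r i j) q = 0) :
    ρ q * materialDeriv u (fun r => u r j) q + u q j * divergence f q + Dx j p q
      - divergence (fun r i => g r i j) q = 0 := by
  have huj : DifferentiableAt ℝ (fun r => u r j) q := by fun_prop
  have hconv : Dt (fun r => ρ r * u r j) q + divergence (fun r i => u r i * (ρ r * u r j)) q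
      = ρ q * materialDeriv u (fun r => u r j) q + u q j * materialDeriv u ρ q
        + ρ q * u q j * divergence u q := by
    rw [divergence_mul_right (hρ.fun_mul huj) hu, ← materialDeriv_mul hρ huj]
    unfold materialDeriv
    ring
  linear_combination hmom - hconv - u q j * hmass

theorem kinetic_energy_balance {g : ℝ × (Fin n → ℝ) → Fin n → Fin n → ℝ}
    (hu : DifferentiableAt ℝ u q)
    (hmom : ∀ j, ρ q * materialDeriv u (fun r => u r j) q + u q j * divergence f q + Dx j p q
      - divergence (fun r i => g r i j) q = 0) :
    ρ q * materialDeriv u (fun r => kineticEnergy (u r)) q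
      + 2 * kineticEnergy (u q) * divergence f q + ∑ j, u q j * Dx j p q
      - ∑ j, u q j * divergence (fun r i => g r i j) q = 0 := by
  rw [materialDeriv_kineticEnergy hu, kineticEnergy]
  simp only [mul_sum, sum_mul, ← sum_add_distrib, ← sum_sub_distrib]
  exact sum_eq_zero fun j _ => by linear_combination u q j * hmom j

theorem internal_energy_balance {h : ℝ × (Fin n → ℝ) → Fin n → ℝ}
    {g : ℝ × (Fin n → ℝ) → Fin n → Fin n → ℝ} (hρ : DifferentiableAt ℝ ρ q)
    (hu : DifferentiableAt ℝ u q) (he : DifferentiableAt ℝ e q) (hp : DifferentiableAt ℝ p q)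
    (hh : DifferentiableAt ℝ h q) (hg : DifferentiableAt ℝ g q)
    (hmass : materialDeriv u ρ q + ρ q * divergence u q = divergence f q)
    (hmom : ∀ j, ρ q * materialDeriv u (fun r => u r j) q + u q j * divergence f q + Dx j p q
      - divergence (fun r i => g r i j) q = 0)
    (henergy : Dt (fun r => ρ r * (e r + kineticEnergy (u r))) q
      + divergence (fun r i => u r i * (ρ r * (e r + kineticEnergy (u r)) + p r)) q
      - divergence (fun r i => h r i + ∑ j, g r i j * u r j) q = 0) :
    ρ q * materialDeriv u e q + (e q - kineticEnergy (u q)) * divergence f q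
      + p q * divergence u q - divergence h q
      - ∑ i, ∑ j, g q i j * Dx i (fun r => u r j) q = 0 := by
  have hK : DifferentiableAt ℝ (fun r => kineticEnergy (u r)) q := by fun_prop
  have hE : DifferentiableAt ℝ (fun r => ρ r * (e r + kineticEnergy (u r))) q := by fun_prop
  have hmatE : materialDeriv u (fun r => ρ r * (e r + kineticEnergy (u r))) q
      = ρ q * (materialDeriv u e q + materialDeriv u (fun r => kineticEnergy (u r)) q)
        + (e q + kineticEnergy (u q)) * materialDeriv u ρ q := by
    rw [materialDeriv_mul hρ (he.fun_add hK), materialDeriv_add he hK]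
  have hflux : ∑ i, u q i * Dx i (fun r => ρ r * (e r + kineticEnergy (u r)) + p r) q
      = ∑ i, u q i * Dx i (fun r => ρ r * (e r + kineticEnergy (u r))) q
        + ∑ i, u q i * Dx i p q := by
    rw [← sum_add_distrib]
    exact sum_congr rfl fun i _ => by rw [Dx, fderiv_add_apply hE hp, mul_add]; rfl
  rw [divergence_mul_right (hE.fun_add hp) hu, divergence_add_sum_mul hh hg hu, hflux] at henergy
  have hkin := kinetic_energy_balance hu hmom
  unfold materialDeriv at hmatE hkin hmass ⊢
  linear_combination henergy - hmatE - hkin - (e q + kineticEnergy (u q)) * hmass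

theorem internal_energy_balance_of_decomposition {h : ℝ × (Fin n → ℝ) → Fin n → ℝ}
    {g G : ℝ × (Fin n → ℝ) → Fin n → Fin n → ℝ} {l : ℝ × (Fin n → ℝ) → Fin n → ℝ}
    (hu : DifferentiableAt ℝ u q) (hf : DifferentiableAt ℝ f q) (hl : DifferentiableAt ℝ l q)
    (hg : ∀ i j, g q i j = G q i j + f q i * u q j)
    (hh : ∀ r i, h r i = l r i - kineticEnergy (u r) * f r i)
    (hint : ρ q * materialDeriv u e q + (e q - kineticEnergy (u q)) * divergence f q
      + p q * divergence u q - divergence h q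
      - ∑ i, ∑ j, g q i j * Dx i (fun r => u r j) q = 0) :
    ρ q * materialDeriv u e q + e q * divergence f q + p q * divergence u q - divergence l q
      - ∑ i, ∑ j, G q i j * Dx i (fun r => u r j) q = 0 := by
  rw [show h = fun r i => l r i - kineticEnergy (u r) * f r i from funext₂ hh,
    divergence_sub hl (by fun_prop), divergence_mul_left (by fun_prop) hf] at hint
  simp only [hg, Dx, fderiv_kineticEnergy_apply hu, add_mul, sum_add_distrib, mul_sum,
    mul_assoc] at hint ⊢
  linear_combination hint

theorem entropy_balance {s : ℝ × ℝ → ℝ} {S σρ σe : ℝ × (Fin n → ℝ) → ℝ}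
    {l : ℝ × (Fin n → ℝ) → Fin n → ℝ} {G : ℝ × (Fin n → ℝ) → Fin n → Fin n → ℝ}
    (hρ : DifferentiableAt ℝ ρ q) (he : DifferentiableAt ℝ e q)
    (hσρ : DifferentiableAt ℝ σρ q) (hσe : DifferentiableAt ℝ σe q)
    (hf : DifferentiableAt ℝ f q) (hl : DifferentiableAt ℝ l q)
    (hs : DifferentiableAt ℝ s (ρ q, e q)) (hS : ∀ r, S r = s (ρ r, e r))
    (hσρq : σρ q = sRho s (ρ q, e q)) (hσeq : σe q = sE s (ρ q, e q)) (hσe0 : σe q ≠ 0)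
    (hp : p q = -ρ q ^ 2 * σρ q / σe q)
    (hmass : materialDeriv u ρ q + ρ q * divergence u q = divergence f q)
    (hint : ρ q * materialDeriv u e q + e q * divergence f q + p q * divergence u q
      - divergence l q - ∑ i, ∑ j, G q i j * Dx i (fun r => u r j) q = 0) :
    ρ q * materialDeriv u S q
      + divergence (fun r i => (e r * σe r - ρ r * σρ r) * f r i - σe r * l r i) q
      - ∑ i, f q i * Dx i (fun r => e r * σe r - ρ r * σρ r) q
      + ∑ i, l q i * Dx i σe q
      - σe q * ∑ i, ∑ j, G q i j * Dx i (fun r => u r j) q = 0 := by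
  have hchain : materialDeriv u S q = σρ q * materialDeriv u ρ q + σe q * materialDeriv u e q := by
    rw [funext hS, materialDeriv_comp_prodMk hs hρ he, hσρq, hσeq, sRho, sE]
  have hgibbs : σe q * p q = -(ρ q ^ 2 * σρ q) := by
    rw [hp]; field_simp
  have hφ : DifferentiableAt ℝ (fun r => e r * σe r - ρ r * σρ r) q := by fun_prop
  rw [divergence_sub (by fun_prop) (by fun_prop), divergence_mul_left hφ hf,
    divergence_mul_left hσe hl, hchain]
  linear_combination σe q * hint + ρ q * σρ q * hmass - divergence u q * hgibbs

end Balance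

theorem entropy_identity_general
    (n : ℕ)
    (s : ℝ × ℝ → ℝ) (hs : ContDiffOn ℝ 2 s dom)
    (hsepos : ∀ x ∈ dom, 0 < sE s x)
    -- the fields of the solution
    (ρ E : ℝ × (Fin n → ℝ) → ℝ)
    (m fvec lvec : ℝ × (Fin n → ℝ) → Fin n → ℝ)
    (G : ℝ × (Fin n → ℝ) → Fin n → Fin n → ℝ)
    (hρ : ContDiff ℝ 2 ρ) (hE : ContDiff ℝ 2 E) (hm : ContDiff ℝ 2 m)
    (hfvec : ContDiff ℝ 2 fvec) (hlvec : ContDiff ℝ 2 lvec) (hG : ContDiff ℝ 2 G)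
    (hρpos : ∀ q, 0 < ρ q)
    -- derived fields: velocity, internal energy, entropy, pressure
    (u : ℝ × (Fin n → ℝ) → Fin n → ℝ) (hu : ∀ q i, u q i = m q i / ρ q)
    (eI : ℝ × (Fin n → ℝ) → ℝ)
    (heI : ∀ q, eI q = E q / ρ q - (1 / 2) * ∑ i, (u q i) ^ 2)
    (heIpos : ∀ q, 0 < eI q)
    (S seF sρF pF : ℝ × (Fin n → ℝ) → ℝ)
    (hS : ∀ q, S q = s (ρ q, eI q))
    (hseF : ∀ q, seF q = sE s (ρ q, eI q))
    (hsρF : ∀ q, sρF q = sRho s (ρ q, eI q))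
    (hpF : ∀ q, pF q = -(ρ q) ^ 2 * sρF q / seF q)
    -- the viscous fluxes `𝕘 = 𝔾 + f ⊗ u` and `h = l - ½|u|² f`
    (g : ℝ × (Fin n → ℝ) → Fin n → Fin n → ℝ)
    (hg : ∀ q i j, g q i j = G q i j + fvec q i * u q j)
    (h : ℝ × (Fin n → ℝ) → Fin n → ℝ)
    (hh : ∀ q i, h q i = lvec q i - (1 / 2) * (∑ k, (u q k) ^ 2) * fvec q i)
    -- the regularized Euler system
    (mass : ∀ q : ℝ × (Fin n → ℝ), 0 ≤ q.1 →
      Dt ρ q + (∑ i, Dx i (fun r => m r i) q) - (∑ i, Dx i (fun r => fvec r i) q) = 0)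
    (momentum : ∀ q : ℝ × (Fin n → ℝ), 0 ≤ q.1 → ∀ j,
      Dt (fun r => m r j) q + (∑ i, Dx i (fun r => u r i * m r j) q) + Dx j pF q
        - (∑ i, Dx i (fun r => g r i j) q) = 0)
    (energy : ∀ q : ℝ × (Fin n → ℝ), 0 ≤ q.1 →
      Dt E q + (∑ i, Dx i (fun r => u r i * (E r + pF r)) q)
        - (∑ i, Dx i (fun r => h r i + ∑ j, g r i j * u r j) q) = 0) :
    -- the entropy identity
    ∀ q : ℝ × (Fin n → ℝ), 0 ≤ q.1 →
      ρ q * (Dt S q + ∑ i, u q i * Dx i S q)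
        + (∑ i, Dx i (fun r => (eI r * seF r - ρ r * sρF r) * fvec r i - seF r * lvec r i) q)
        - (∑ i, fvec q i * Dx i (fun r => eI r * seF r - ρ r * sρF r) q)
        + (∑ i, lvec q i * Dx i seF q)
        - seF q * ∑ i, ∑ j, G q i j * Dx i (fun r => u r j) q = 0 := by
  intro q hq
  have hdom : (ρ q, eI q) ∈ dom := ⟨hρpos q, heIpos q⟩
  have hs2 : ContDiffAt ℝ 2 s (ρ q, eI q) := hs.contDiffAt (isOpen_dom.mem_nhds hdom)
  have hseF0 : seF q ≠ 0 := by rw [hseF]; exact (hsepos _ hdom).ne'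
  have hρd := hρ.differentiable two_ne_zero
  have hEd := hE.differentiable two_ne_zero
  have hmd := hm.differentiable two_ne_zero
  have hfd := hfvec.differentiable two_ne_zero
  have hld := hlvec.differentiable two_ne_zero
  have hGd := hG.differentiable two_ne_zero
  have hud : DifferentiableAt ℝ u q := by
    rw [funext₂ hu]; fun_prop (disch := exact (hρpos q).ne')
  have hed : DifferentiableAt ℝ eI q := by
    rw [funext heI]; fun_prop (disch := exact (hρpos q).ne')
  have hseFd : DifferentiableAt ℝ seF q := by
    rw [funext hseF]; exact hs2.differentiableAt_D2.comp q ((hρd q).prodMk hed)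
  have hsρFd : DifferentiableAt ℝ sρF q := by
    rw [funext hsρF]; exact hs2.differentiableAt_D1.comp q ((hρd q).prodMk hed)
  have hpFd : DifferentiableAt ℝ pF q := by rw [funext hpF]; fun_prop (disch := exact hseF0)
  obtain rfl : m = fun r i => ρ r * u r i :=
    funext₂ fun r i => by rw [hu]; field_simp [(hρpos r).ne']
  obtain rfl : E = fun r => ρ r * (eI r + kineticEnergy (u r)) :=
    funext fun r => by rw [heI, kineticEnergy]; field_simp [(hρpos r).ne']; ring
  have hmass := mass_balance_material (hρd q) hud (mass q hq)
  have hmom := fun j => momentum_balance_material (hρd q) hud hmass (momentum q hq j)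
  have hint := internal_energy_balance (hρd q) hud hed hpFd (by rw [funext₂ hh]; fun_prop)
    (by rw [funext₃ hg]; fun_prop) hmass hmom (energy q hq)
  exact entropy_balance (hρd q) hed hsρFd hseFd (hfd q) (hld q) (hs2.differentiableAt two_ne_zero)
    hS (hsρF q) (hseF q) hseF0 (hpF q) hmass
    (internal_energy_balance_of_decomposition hud (hfd q) (hld q) (hg q) hh hint)

/-- **Entropy identity for the regularized Euler system:** a smooth solution of the
regularized Euler system with `𝕘 = 𝔾 + f ⊗ u` and `h = l - ½|u|² f` satisfies the
pointwise identity
`ρ(∂_t s + u·∇s) + div((e s_e - ρ s_ρ) f - s_e l) - f·∇(e s_e - ρ s_ρ) + l·∇s_e - s_e (𝔾 : ∇u) = 0`. -/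
theorem entropy_identity
    (n : ℕ) (hn : 0 < n)
    (s : ℝ × ℝ → ℝ) (hs : ContDiffOn ℝ 2 s dom)
    (hsepos : ∀ x ∈ dom, 0 < sE s x)
    -- the fields of the solution
    (ρ E : ℝ × (Fin n → ℝ) → ℝ)
    (m fvec lvec : ℝ × (Fin n → ℝ) → Fin n → ℝ)
    (G : ℝ × (Fin n → ℝ) → Fin n → Fin n → ℝ)
    (hρ : ContDiff ℝ 2 ρ) (hE : ContDiff ℝ 2 E) (hm : ContDiff ℝ 2 m)
    (hfvec : ContDiff ℝ 2 fvec) (hlvec : ContDiff ℝ 2 lvec) (hG : ContDiff ℝ 2 G)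
    (hρpos : ∀ q, 0 < ρ q)
    -- derived fields: velocity, internal energy, entropy, pressure
    (u : ℝ × (Fin n → ℝ) → Fin n → ℝ) (hu : ∀ q i, u q i = m q i / ρ q)
    (eI : ℝ × (Fin n → ℝ) → ℝ)
    (heI : ∀ q, eI q = E q / ρ q - (1 / 2) * ∑ i, (u q i) ^ 2)
    (heIpos : ∀ q, 0 < eI q)
    (S seF sρF pF : ℝ × (Fin n → ℝ) → ℝ)
    (hS : ∀ q, S q = s (ρ q, eI q))
    (hseF : ∀ q, seF q = sE s (ρ q, eI q))
    (hsρF : ∀ q, sρF q = sRho s (ρ q, eI q))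
    (hpF : ∀ q, pF q = -(ρ q) ^ 2 * sρF q / seF q)
    -- the viscous fluxes `𝕘 = 𝔾 + f ⊗ u` and `h = l - ½|u|² f`
    (g : ℝ × (Fin n → ℝ) → Fin n → Fin n → ℝ)
    (hg : ∀ q i j, g q i j = G q i j + fvec q i * u q j)
    (h : ℝ × (Fin n → ℝ) → Fin n → ℝ)
    (hh : ∀ q i, h q i = lvec q i - (1 / 2) * (∑ k, (u q k) ^ 2) * fvec q i)
    -- the regularized Euler system
    (mass : ∀ q : ℝ × (Fin n → ℝ), 0 ≤ q.1 →
      Dt ρ q + (∑ i, Dx i (fun r => m r i) q) - (∑ i, Dx i (fun r => fvec r i) q) = 0)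
    (momentum : ∀ q : ℝ × (Fin n → ℝ), 0 ≤ q.1 → ∀ j,
      Dt (fun r => m r j) q + (∑ i, Dx i (fun r => u r i * m r j) q) + Dx j pF q
        - (∑ i, Dx i (fun r => g r i j) q) = 0)
    (energy : ∀ q : ℝ × (Fin n → ℝ), 0 ≤ q.1 →
      Dt E q + (∑ i, Dx i (fun r => u r i * (E r + pF r)) q)
        - (∑ i, Dx i (fun r => h r i + ∑ j, g r i j * u r j) q) = 0) :
    -- the entropy identity
    ∀ q : ℝ × (Fin n → ℝ), 0 ≤ q.1 →
      ρ q * (Dt S q + ∑ i, u q i * Dx i S q)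
        + (∑ i, Dx i (fun r => (eI r * seF r - ρ r * sρF r) * fvec r i - seF r * lvec r i) q)
        - (∑ i, fvec q i * Dx i (fun r => eI r * seF r - ρ r * sρF r) q)
        + (∑ i, lvec q i * Dx i seF q)
        - seF q * ∑ i, ∑ j, G q i j * Dx i (fun r => u r j) q = 0 :=
  entropy_identity_general n s hs hsepos ρ E m fvec lvec G hρ hE hm hfvec hlvec hG hρpos u hu eI heI
    heIpos S seF sρF pF hS hseF hsρF hpF g hg h hh mass momentum energy
end
end

section
/- Shifted negativity of J: Fix (ρ,e) ∈ (0,∞)², a ≥ 0 and d > 0, and let λ ∈ ℝ be defined by d(1+λ) = a. Let N be as in the definition of J (n₁₁ = (d−a) ρ s_ρ s_e^{−1} s_{ρe} + a ρ^{−1} ∂_ρ(ρ² s_ρ), 2 n₁₂ = (d−a) ρ s_ρ s_e^{−1} s_{ee} + (d+a) ρ s_{ρe}, n₂₂ = d ρ s_{ee}) and let Q be the 2×2 block matrix with q₁₁ = ρ s_ρ s_e^{−1} s_{ρe}, q₁₂ = (1/2)(ρ s_ρ s_e^{−1} s_{ee} + ρ s_{ρe}), q₂₂ = ρ s_{ee},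 so that (X,Y)·Q·(X,Y)^T represents (ρ/s_e) ∇s_e · ∇s. Then the quadratic form M := N + λ d Q is negative semi-definite; if moreover a > 0, then M is negative definite. -/
noncomputable section

open Real

/- The shift `λ d = a - d` is exactly what cancels every term of `N` carrying the factor
`d - a`, leaving `M = a S` with `S = [[ρ⁻¹ ∂_ρ(ρ² s_ρ), ρ s_{ρe}], [ρ s_{ρe}, ρ s_{ee}]]`.
Since `det S = det Σ`, the convexity conditions say that `S` is negative definite, so
`M` is negative semi-definite for `a ≥ 0` and negative definite for `a > 0`. On `ℝ^d × ℝ^d` the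
block form splits into `d` scalar binary quadratic forms, one per coordinate. -/

section BlockQuadForm

variable {ι : Type*} [Fintype ι]

def blockQuadForm (m₁₁ m₁₂ m₂₂ : ℝ) (X Y : ι → ℝ) : ℝ :=
  m₁₁ * (∑ i, X i * X i) + 2 * m₁₂ * (∑ i, X i * Y i) + m₂₂ * (∑ i, Y i * Y i)

lemma blockQuadForm_eq_sum (m₁₁ m₁₂ m₂₂ : ℝ) (X Y : ι → ℝ) :
    blockQuadForm m₁₁ m₁₂ m₂₂ X Y =
      ∑ i, (m₁₁ * (X i * X i) + 2 * m₁₂ * (X i * Y i) + m₂₂ * (Y i * Y i)) := by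
  simp only [blockQuadForm, Finset.mul_sum, Finset.sum_add_distrib]

lemma blockQuadForm_mul_left (c m₁₁ m₁₂ m₂₂ : ℝ) (X Y : ι → ℝ) :
    blockQuadForm (c * m₁₁) (c * m₁₂) (c * m₂₂) X Y = c * blockQuadForm m₁₁ m₁₂ m₂₂ X Y := by
  unfold blockQuadForm
  ring

lemma mul_binaryQuadForm (p q r x y : ℝ) :
    p * (p * (x * x) + 2 * q * (x * y) + r * (y * y)) =
      (p * x + q * y) ^ 2 + (p * r - q ^ 2) * (y * y) := by
  ring

lemma binaryQuadForm_nonpos {p q r : ℝ} (hp : p ≤ 0) (hr : r ≤ 0) (hq : q ^ 2 ≤ p * r)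
    (x y : ℝ) : p * (x * x) + 2 * q * (x * y) + r * (y * y) ≤ 0 := by
  rcases hp.lt_or_eq with hp | rfl
  · refine nonpos_of_mul_nonneg_right ?_ hp
    rw [mul_binaryQuadForm]
    exact add_nonneg (sq_nonneg _) (mul_nonneg (sub_nonneg.2 hq) (mul_self_nonneg y))
  · obtain rfl : q = 0 := by simpa using hq
    nlinarith [mul_self_nonneg y]

lemma binaryQuadForm_neg {p q r : ℝ} (hp : p < 0) (hq : q ^ 2 < p * r) {x y : ℝ}
    (hxy : x ≠ 0 ∨ y ≠ 0) : p * (x * x) + 2 * q * (x * y) + r * (y * y) < 0 := by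
  refine neg_of_mul_pos_right ?_ hp.le
  rw [mul_binaryQuadForm]
  rcases eq_or_ne y 0 with rfl | hy
  · have hx : x ≠ 0 := by simpa using hxy
    simp only [mul_zero, add_zero]
    exact sq_pos_of_ne_zero (mul_ne_zero hp.ne hx)
  · exact add_pos_of_nonneg_of_pos (sq_nonneg _) (mul_pos (sub_pos.2 hq) (mul_self_pos.2 hy))

lemma blockQuadForm_nonpos {p q r : ℝ} (hp : p ≤ 0) (hr : r ≤ 0) (hq : q ^ 2 ≤ p * r)
    (X Y : ι → ℝ) : blockQuadForm p q r X Y ≤ 0 := by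
  rw [blockQuadForm_eq_sum]
  exact Finset.sum_nonpos fun i _ => binaryQuadForm_nonpos hp hr hq (X i) (Y i)

lemma blockQuadForm_neg {p q r : ℝ} (hp : p < 0) (hq : q ^ 2 < p * r) {X Y : ι → ℝ}
    (hXY : X ≠ 0 ∨ Y ≠ 0) : blockQuadForm p q r X Y < 0 := by
  have hr : r < 0 := neg_of_mul_pos_right ((sq_nonneg q).trans_lt hq) hp.le
  obtain ⟨i, hi⟩ : ∃ i, X i ≠ 0 ∨ Y i ≠ 0 := by
    rcases hXY with h | h
    · obtain ⟨i, hi⟩ := Function.ne_iff.1 h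
      exact ⟨i, Or.inl hi⟩
    · obtain ⟨i, hi⟩ := Function.ne_iff.1 h
      exact ⟨i, Or.inr hi⟩
  rw [blockQuadForm_eq_sum]
  exact Finset.sum_neg' (fun j _ => binaryQuadForm_nonpos hp.le hr.le hq.le (X j) (Y j))
    ⟨i, Finset.mem_univ i, binaryQuadForm_neg hp hq hi⟩

end BlockQuadForm

lemma Convexity.rhoScaled_negDef {s : ℝ × ℝ → ℝ} (hconv : Convexity s) {z : ℝ × ℝ}
    (hz : z ∈ dom) :
    z.1⁻¹ * dRho2sRho s z < 0 ∧ z.1 * sEE s z < 0 ∧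
      (z.1 * sRhoE s z) ^ 2 < z.1⁻¹ * dRho2sRho s z * (z.1 * sEE s z) := by
  obtain ⟨hA, hC, hdet⟩ := hconv z hz
  have hρ : z.1 ≠ 0 := hz.1.ne'
  refine ⟨mul_neg_of_pos_of_neg (inv_pos.2 hz.1) hA, mul_neg_of_pos_of_neg hz.1 hC, ?_⟩
  have h : z.1⁻¹ * dRho2sRho s z * (z.1 * sEE s z) - (z.1 * sRhoE s z) ^ 2 = detSigma s z := by
    rw [detSigma]
    field_simp
  linarith

theorem J_shifted_negative_general
    (s : ℝ × ℝ → ℝ)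
    (hconv : Convexity s)
    (z : ℝ × ℝ) (hz : z ∈ dom)
    (a dcoef lam : ℝ) (ha : 0 ≤ a) (hlam : dcoef * (1 + lam) = a)
    (n11 n12 n22 q11 q12 q22 m11 m12 m22 : ℝ)
    (e11 : n11 = (dcoef - a) * z.1 * sRho s z * (sE s z)⁻¹ * sRhoE s z
      + a * z.1⁻¹ * dRho2sRho s z)
    (e12 : 2 * n12 = (dcoef - a) * z.1 * sRho s z * (sE s z)⁻¹ * sEE s z
      + (dcoef + a) * z.1 * sRhoE s z)
    (e22 : n22 = dcoef * z.1 * sEE s z)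
    (g11 : q11 = z.1 * sRho s z * (sE s z)⁻¹ * sRhoE s z)
    (g12 : q12 = (1 / 2) * (z.1 * sRho s z * (sE s z)⁻¹ * sEE s z + z.1 * sRhoE s z))
    (g22 : q22 = z.1 * sEE s z)
    (k11 : m11 = n11 + lam * dcoef * q11)
    (k12 : m12 = n12 + lam * dcoef * q12)
    (k22 : m22 = n22 + lam * dcoef * q22)
    (d : ℕ) :
    (∀ X Y : Fin d → ℝ,
        m11 * (∑ i, X i * X i) + 2 * m12 * (∑ i, X i * Y i) + m22 * (∑ i, Y i * Y i) ≤ 0) ∧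
    (0 < a → ∀ X Y : Fin d → ℝ, (X ≠ 0 ∨ Y ≠ 0) →
        m11 * (∑ i, X i * X i) + 2 * m12 * (∑ i, X i * Y i) + m22 * (∑ i, Y i * Y i) < 0) := by
  obtain ⟨hp, hr, hq⟩ := hconv.rhoScaled_negDef hz
  have hshift : lam * dcoef = a - dcoef := by linear_combination hlam
  have hm11 : m11 = a * (z.1⁻¹ * dRho2sRho s z) := by
    linear_combination k11 + e11 + lam * dcoef * g11 +
      z.1 * sRho s z * (sE s z)⁻¹ * sRhoE s z * hshift
  have hm12 : m12 = a * (z.1 * sRhoE s z) := by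
    linear_combination k12 + (1 / 2) * e12 + lam * dcoef * g12 +
      (1 / 2) * (z.1 * sRho s z * (sE s z)⁻¹ * sEE s z + z.1 * sRhoE s z) * hshift
  have hm22 : m22 = a * (z.1 * sEE s z) := by
    linear_combination k22 + e22 + lam * dcoef * g22 + z.1 * sEE s z * hshift
  have hM (X Y : Fin d → ℝ) :
      m11 * (∑ i, X i * X i) + 2 * m12 * (∑ i, X i * Y i) + m22 * (∑ i, Y i * Y i) =
        a * blockQuadForm (z.1⁻¹ * dRho2sRho s z) (z.1 * sRhoE s z) (z.1 * sEE s z) X Y := by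
    rw [← blockQuadForm_mul_left, ← hm11, ← hm12, ← hm22, blockQuadForm]
  refine ⟨fun X Y => ?_, fun ha X Y hXY => ?_⟩
  · rw [hM]
    exact mul_nonpos_of_nonneg_of_nonpos ha (blockQuadForm_nonpos hp.le hr.le hq.le X Y)
  · rw [hM]
    exact mul_neg_of_pos_of_neg ha (blockQuadForm_neg hp hq hXY)

/-- **Shifted negativity of `J`:** with `λ` defined by `d(1+λ) = a`, the quadratic form
generated by `M := N + λ d Q` is negative semi-definite; it is negative definite
if moreover `a > 0`. -/
theorem J_shifted_negative
    (s : ℝ × ℝ → ℝ) (hs : ContDiffOn ℝ 2 s dom)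
    (hse : ∀ x ∈ dom, 0 < sE s x) (hconv : Convexity s)
    (z : ℝ × ℝ) (hz : z ∈ dom)
    (a dcoef lam : ℝ) (ha : 0 ≤ a) (hd : 0 < dcoef) (hlam : dcoef * (1 + lam) = a)
    (n11 n12 n22 q11 q12 q22 m11 m12 m22 : ℝ)
    (e11 : n11 = (dcoef - a) * z.1 * sRho s z * (sE s z)⁻¹ * sRhoE s z
      + a * z.1⁻¹ * dRho2sRho s z)
    (e12 : 2 * n12 = (dcoef - a) * z.1 * sRho s z * (sE s z)⁻¹ * sEE s z
      + (dcoef + a) * z.1 * sRhoE s z)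
    (e22 : n22 = dcoef * z.1 * sEE s z)
    (g11 : q11 = z.1 * sRho s z * (sE s z)⁻¹ * sRhoE s z)
    (g12 : q12 = (1 / 2) * (z.1 * sRho s z * (sE s z)⁻¹ * sEE s z + z.1 * sRhoE s z))
    (g22 : q22 = z.1 * sEE s z)
    (k11 : m11 = n11 + lam * dcoef * q11)
    (k12 : m12 = n12 + lam * dcoef * q12)
    (k22 : m22 = n22 + lam * dcoef * q22)
    (d : ℕ) (hdim : 0 < d) :
    (∀ X Y : Fin d → ℝ,
        m11 * (∑ i, X i * X i) + 2 * m12 * (∑ i, X i * Y i) + m22 * (∑ i, Y i * Y i) ≤ 0) ∧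
    (0 < a → ∀ X Y : Fin d → ℝ, (X ≠ 0 ∨ Y ≠ 0) →
        m11 * (∑ i, X i * X i) + 2 * m12 * (∑ i, X i * Y i) + m22 * (∑ i, Y i * Y i) < 0) :=
  J_shifted_negative_general s hconv z hz a dcoef lam ha hlam n11 n12 n22 q11 q12 q22 m11 m12 m22
    e11 e12 e22 g11 g12 g22 k11 k12 k22 d
end
end

section
/- Brenner-type reformulation: Let ρ > 0, u, E be smooth fields on ℝ^d × [0,∞) with m := ρu, e := E/ρ − ½|u|², and let f, l be smooth vector fields and 𝔾 a smooth tensor field. Define the mass velocity u_m := u − ρ^{−1} f. Then (ρ, m, E) solves ∂_t ρ + div m − div f = 0, ∂_t m + div(u⊗m) + ∇p − div(𝔾 + f⊗u) = 0, ∂_t E + div(u(E+p)) − div(l + ½|u|² f + 𝔾·u) = 0 if and only if it solves ∂_t ρ + div(u_m ρ) = 0, ∂_t m + div(u_m ⊗ m) + ∇p − div 𝔾 = 0, ∂_t E + div(u_m E) − div(l − e f) + div((p I − 𝔾)·u) = 0. -/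
noncomputable section

/-!
The two systems differ only in how their fluxes are split. Pointwise, and using `ρ ≠ 0`,
`u_m ρ = ρ u - f`, `u_m ⊗ m = u ⊗ m - f ⊗ u` and
`u_m E + e f + p u = u (E + p) - ½ |u|² f`, so, the divergence being additive on differentiable
fields, each equation of one system has the same left-hand side as its counterpart.
-/

open Finset

section Derivatives

variable {n : ℕ} (i : Fin n) {q : ℝ × (Fin n → ℝ)}

theorem Dx_add {f g : ℝ × (Fin n → ℝ) → ℝ} (hf : DifferentiableAt ℝ f q)
    (hg : DifferentiableAt ℝ g q) : Dx i (fun r => f r + g r) q = Dx i f q + Dx i g q := by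
  simp [Dx, fderiv_fun_add hf hg]

theorem Dx_sub {f g : ℝ × (Fin n → ℝ) → ℝ} (hf : DifferentiableAt ℝ f q)
    (hg : DifferentiableAt ℝ g q) : Dx i (fun r => f r - g r) q = Dx i f q - Dx i g q := by
  simp [Dx, fderiv_fun_sub hf hg]

variable {F H : Fin n → ℝ × (Fin n → ℝ) → ℝ}

theorem sum_Dx_add (hF : ∀ i, DifferentiableAt ℝ (F i) q)
    (hH : ∀ i, DifferentiableAt ℝ (H i) q) :
    ∑ i, Dx i (fun r => F i r + H i r) q = ∑ i, Dx i (F i) q + ∑ i, Dx i (H i) q := by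
  rw [← sum_add_distrib]
  exact sum_congr rfl fun i _ => Dx_add i (hF i) (hH i)

theorem sum_Dx_sub (hF : ∀ i, DifferentiableAt ℝ (F i) q)
    (hH : ∀ i, DifferentiableAt ℝ (H i) q) :
    ∑ i, Dx i (fun r => F i r - H i r) q = ∑ i, Dx i (F i) q - ∑ i, Dx i (H i) q := by
  rw [← sum_sub_distrib]
  exact sum_congr rfl fun i _ => Dx_sub i (hF i) (hH i)

end Derivatives

section Fluxes

variable {n : ℕ} {ρ E p : ℝ × (Fin n → ℝ) → ℝ}
  {u f l : ℝ × (Fin n → ℝ) → Fin n → ℝ}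
  {G : ℝ × (Fin n → ℝ) → Fin n → Fin n → ℝ}

theorem sum_Dx_massVelocity_mul_density (hρ : Differentiable ℝ ρ) (hρ0 : ∀ r, ρ r ≠ 0)
    (hu : Differentiable ℝ u) (hf : Differentiable ℝ f) (q : ℝ × (Fin n → ℝ)) :
    ∑ i, Dx i (fun r => (u r i - (ρ r)⁻¹ * f r i) * ρ r) q
      = ∑ i, Dx i (fun r => ρ r * u r i) q - ∑ i, Dx i (fun r => f r i) q := by
  rw [← sum_Dx_sub (by fun_prop) (by fun_prop)]
  congr! 2 with i
  ext r
  field_simp [hρ0 r]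

theorem sum_Dx_massVelocity_mul_momentum_sub_stress (hρ : Differentiable ℝ ρ)
    (hρ0 : ∀ r, ρ r ≠ 0) (hu : Differentiable ℝ u) (hf : Differentiable ℝ f)
    (hG : Differentiable ℝ G) (q : ℝ × (Fin n → ℝ)) (j : Fin n) :
    ∑ i, Dx i (fun r => (u r i - (ρ r)⁻¹ * f r i) * (ρ r * u r j)) q
        - ∑ i, Dx i (fun r => G r i j) q
      = ∑ i, Dx i (fun r => u r i * (ρ r * u r j)) q
        - ∑ i, Dx i (fun r => G r i j + f r i * u r j) q := by
  rw [sum_Dx_add (by fun_prop) (by fun_prop), ← sub_sub, sub_right_comm, sub_left_inj,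
    ← sum_Dx_sub (by fun_prop) (by fun_prop)]
  congr! 2 with i
  ext r
  field_simp [hρ0 r]

theorem sum_Dx_energyFlux_massVelocity (hρ : Differentiable ℝ ρ) (hρ0 : ∀ r, ρ r ≠ 0)
    (hu : Differentiable ℝ u) (hf : Differentiable ℝ f) (hE : Differentiable ℝ E)
    (hp : Differentiable ℝ p) (hl : Differentiable ℝ l) (hG : Differentiable ℝ G)
    (q : ℝ × (Fin n → ℝ)) :
    ∑ i, Dx i (fun r => (u r i - (ρ r)⁻¹ * f r i) * E r) q
        - ∑ i, Dx i (fun r => l r i - (E r / ρ r - 1 / 2 * ∑ k, u r k ^ 2) * f r i) q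
        + ∑ i, Dx i (fun r => p r * u r i - ∑ j, G r i j * u r j) q
      = ∑ i, Dx i (fun r => u r i * (E r + p r)) q
        - ∑ i, Dx i (fun r => l r i + 1 / 2 * (∑ k, u r k ^ 2) * f r i
            + ∑ j, G r i j * u r j) q := by
  rw [← sum_Dx_sub ?_ ?_, ← sum_Dx_add ?_ ?_, ← sum_Dx_sub ?_ ?_]
  · congr! 2 with i
    ext r
    field_simp [hρ0 r]
    ring
  all_goals intro i; fun_prop (disch := exact hρ0 _)

end Fluxes

theorem brenner_reformulation_general
    (n : ℕ)
    (ρ E pfield : ℝ × (Fin n → ℝ) → ℝ)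
    (u fvec lvec : ℝ × (Fin n → ℝ) → Fin n → ℝ)
    (G : ℝ × (Fin n → ℝ) → Fin n → Fin n → ℝ)
    (hρ : ContDiff ℝ 2 ρ) (hu : ContDiff ℝ 2 u) (hE : ContDiff ℝ 2 E)
    (hp : ContDiff ℝ 2 pfield) (hfvec : ContDiff ℝ 2 fvec)
    (hlvec : ContDiff ℝ 2 lvec) (hG : ContDiff ℝ 2 G)
    (hρpos : ∀ q, 0 < ρ q)
    -- derived fields
    (m : ℝ × (Fin n → ℝ) → Fin n → ℝ) (hm : ∀ q j, m q j = ρ q * u q j)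
    (eI : ℝ × (Fin n → ℝ) → ℝ)
    (heI : ∀ q, eI q = E q / ρ q - (1 / 2) * ∑ i, (u q i) ^ 2)
    (um : ℝ × (Fin n → ℝ) → Fin n → ℝ)
    (hum : ∀ q i, um q i = u q i - (ρ q)⁻¹ * fvec q i) :
    -- the regularized system ...
    ((∀ q : ℝ × (Fin n → ℝ), 0 ≤ q.1 →
        Dt ρ q + (∑ i, Dx i (fun r => m r i) q)
          - (∑ i, Dx i (fun r => fvec r i) q) = 0) ∧
     (∀ q : ℝ × (Fin n → ℝ), 0 ≤ q.1 → ∀ j,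
        Dt (fun r => m r j) q + (∑ i, Dx i (fun r => u r i * m r j) q) + Dx j pfield q
          - (∑ i, Dx i (fun r => G r i j + fvec r i * u r j) q) = 0) ∧
     (∀ q : ℝ × (Fin n → ℝ), 0 ≤ q.1 →
        Dt E q + (∑ i, Dx i (fun r => u r i * (E r + pfield r)) q)
          - (∑ i, Dx i (fun r => lvec r i + (1 / 2) * (∑ k, (u r k) ^ 2) * fvec r i
              + ∑ j, G r i j * u r j) q) = 0))
    ↔
    -- ... is equivalent to the Brenner-type system
    ((∀ q : ℝ × (Fin n → ℝ), 0 ≤ q.1 →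
        Dt ρ q + (∑ i, Dx i (fun r => um r i * ρ r) q) = 0) ∧
     (∀ q : ℝ × (Fin n → ℝ), 0 ≤ q.1 → ∀ j,
        Dt (fun r => m r j) q + (∑ i, Dx i (fun r => um r i * m r j) q) + Dx j pfield q
          - (∑ i, Dx i (fun r => G r i j) q) = 0) ∧
     (∀ q : ℝ × (Fin n → ℝ), 0 ≤ q.1 →
        Dt E q + (∑ i, Dx i (fun r => um r i * E r) q)
          - (∑ i, Dx i (fun r => lvec r i - eI r * fvec r i) q)
          + (∑ i, Dx i (fun r => pfield r * u r i - ∑ j, G r i j * u r j) q) = 0)) := by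
  have h2 : (2 : WithTop ℕ∞) ≠ 0 := two_ne_zero
  have hρ0 : ∀ q, ρ q ≠ 0 := fun q => (hρpos q).ne'
  have dρ := hρ.differentiable h2
  have du := hu.differentiable h2
  have dE := hE.differentiable h2
  have dp := hp.differentiable h2
  have df := hfvec.differentiable h2
  have dl := hlvec.differentiable h2
  have dG := hG.differentiable h2
  simp only [hm, hum, heI]
  refine and_congr (forall₂_congr fun q _ => ?_) (and_congr
    (forall₂_congr fun q _ => forall_congr' fun j => ?_) (forall₂_congr fun q _ => ?_))
  · have mass := sum_Dx_massVelocity_mul_density dρ hρ0 du df q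
    constructor <;> intro h <;> linarith
  · have momentum := sum_Dx_massVelocity_mul_momentum_sub_stress dρ hρ0 du df dG q j
    constructor <;> intro h <;> linarith
  · have energy := sum_Dx_energyFlux_massVelocity dρ hρ0 du df dE dp dl dG q
    constructor <;> intro h <;> linarith

/-- **Brenner-type reformulation:** with the mass velocity `u_m := u - ρ⁻¹ f`, the fields
`(ρ, m, E)` solve the regularized system with fluxes `𝔾 + f⊗u` and `l + ½|u|² f + 𝔾·u`
if and only if they solve the two-velocity (Brenner-type) system
`∂_t ρ + div(u_m ρ) = 0`, `∂_t m + div(u_m ⊗ m) + ∇p - div 𝔾 = 0`,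
`∂_t E + div(u_m E) - div(l - e f) + div((p I - 𝔾)·u) = 0`. -/
theorem brenner_reformulation
    (n : ℕ) (hn : 0 < n)
    (ρ E pfield : ℝ × (Fin n → ℝ) → ℝ)
    (u fvec lvec : ℝ × (Fin n → ℝ) → Fin n → ℝ)
    (G : ℝ × (Fin n → ℝ) → Fin n → Fin n → ℝ)
    (hρ : ContDiff ℝ 2 ρ) (hu : ContDiff ℝ 2 u) (hE : ContDiff ℝ 2 E)
    (hp : ContDiff ℝ 2 pfield) (hfvec : ContDiff ℝ 2 fvec)
    (hlvec : ContDiff ℝ 2 lvec) (hG : ContDiff ℝ 2 G)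
    (hρpos : ∀ q, 0 < ρ q)
    -- derived fields
    (m : ℝ × (Fin n → ℝ) → Fin n → ℝ) (hm : ∀ q j, m q j = ρ q * u q j)
    (eI : ℝ × (Fin n → ℝ) → ℝ)
    (heI : ∀ q, eI q = E q / ρ q - (1 / 2) * ∑ i, (u q i) ^ 2)
    (um : ℝ × (Fin n → ℝ) → Fin n → ℝ)
    (hum : ∀ q i, um q i = u q i - (ρ q)⁻¹ * fvec q i) :
    -- the regularized system ...
    ((∀ q : ℝ × (Fin n → ℝ), 0 ≤ q.1 →
        Dt ρ q + (∑ i, Dx i (fun r => m r i) q)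
          - (∑ i, Dx i (fun r => fvec r i) q) = 0) ∧
     (∀ q : ℝ × (Fin n → ℝ), 0 ≤ q.1 → ∀ j,
        Dt (fun r => m r j) q + (∑ i, Dx i (fun r => u r i * m r j) q) + Dx j pfield q
          - (∑ i, Dx i (fun r => G r i j + fvec r i * u r j) q) = 0) ∧
     (∀ q : ℝ × (Fin n → ℝ), 0 ≤ q.1 →
        Dt E q + (∑ i, Dx i (fun r => u r i * (E r + pfield r)) q)
          - (∑ i, Dx i (fun r => lvec r i + (1 / 2) * (∑ k, (u r k) ^ 2) * fvec r i
              + ∑ j, G r i j * u r j) q) = 0))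
    ↔
    -- ... is equivalent to the Brenner-type system
    ((∀ q : ℝ × (Fin n → ℝ), 0 ≤ q.1 →
        Dt ρ q + (∑ i, Dx i (fun r => um r i * ρ r) q) = 0) ∧
     (∀ q : ℝ × (Fin n → ℝ), 0 ≤ q.1 → ∀ j,
        Dt (fun r => m r j) q + (∑ i, Dx i (fun r => um r i * m r j) q) + Dx j pfield q
          - (∑ i, Dx i (fun r => G r i j) q) = 0) ∧
     (∀ q : ℝ × (Fin n → ℝ), 0 ≤ q.1 →
        Dt E q + (∑ i, Dx i (fun r => um r i * E r) q)
          - (∑ i, Dx i (fun r => lvec r i - eI r * fvec r i) q)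
          + (∑ i, Dx i (fun r => pfield r * u r i - ∑ j, G r i j * u r j) q) = 0)) :=
  brenner_reformulation_general n ρ E pfield u fvec lvec G hρ hu hE hp hfvec hlvec hG hρpos m hm eI
    heI um hum
end
end
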